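/- Let T > 0 and let α : ℝ × [0,T] × ℝ → ℝ, (x,τ,φ) ↦ α(x,τ,φ), be twice continuously differentiable. Let V : ℝ × [0,T] → ℝ be sufficiently smooth (all partial derivatives ∂_t ∂_x^k V for k ≤ 2 and ∂_x^k V for k ≤ 4 exist and are continuous) with ∂_x V(x,t) > 0 for all (x,t), and define φ(x,τ) := −∂²_x V(x, T−τ) / ∂_x V(x, T−τ). If V satisfies ∂_t V(x,t) − α(x, T−t, φ(x, T−t)) ∂_x V(x,t) = 0 for all x ∈ ℝ and t ∈ (0,T), then φ satisfies the quasilinear parabolic equation in divergence form ∂_τ φ(x,τ) − ∂²_x [ α(x, τ, φ(x,τ)) ] = − ∂_x [ α(x, τ, φ(x,τ)) φ(x,τ) ] for all x ∈ ℝ and τ ∈ (0,T). -/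

import Mathlib

/-!
Write `u = ∂ₓV` and `A(x) = α(x, τ, φ(x, τ))`. Differentiating the HJB equation
`∂ₜV = A ∂ₓV` in `x` and exchanging the order of differentiation shows that `u` solves the
conservation law `∂ₜu = ∂ₓ(A u)`, and a second exchange gives `∂ₜ∂ₓu = ∂ₓ²(A u)`. The exchanges
rest on Peano's form of Schwarz's theorem, which needs only the mixed partial derivative to be
continuous. Since `φ = -∂ₓu / u` is minus the logarithmic derivative of `u`, the equation for `φ`
then follows from the quotient rule by direct computation, the reversal `τ = T - t` accounting
for the sign of `∂_τ φ`.
-/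

/-- Partial derivative in the first (spatial) variable of a function `f(x,t)`. -/
noncomputable def Dx (f : ℝ → ℝ → ℝ) : ℝ → ℝ → ℝ := fun x t => deriv (fun x' => f x' t) x

/-- Partial derivative in the second (time) variable of a function `f(x,t)`. -/
noncomputable def Dt (f : ℝ → ℝ → ℝ) : ℝ → ℝ → ℝ := fun x t => deriv (fun t' => f x t') t

open Filter Topology

/-- The `t`-difference quotients of `f` converge to `∂ₜf(·, t)` pointwise, and by the mean value
inequality their `x`-derivatives converge to `∂ₜ∂ₓf(x, t)` uniformly near `x`; the uniform limit
theorem for derivatives concludes. -/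
theorem hasDerivAt_Dt_of_continuousAt_Dt_Dx {f : ℝ → ℝ → ℝ} {x t : ℝ}
    (hfx : ∀ a b, DifferentiableAt ℝ (f · b) a)
    (hfxt : ∀ a b, DifferentiableAt ℝ (Dx f a ·) b)
    (hft : ∀ a, DifferentiableAt ℝ (f a ·) t)
    (hcont : ContinuousAt (fun q : ℝ × ℝ => Dt (Dx f) q.1 q.2) (x, t)) :
    HasDerivAt (fun a => Dt f a t) (Dt (Dx f) x t) x := by
  set L := Dt (Dx f) x t
  refine hasDerivAt_of_tendstoUniformlyOnFilter (l := 𝓝[≠] (0 : ℝ))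
    (f := fun k a => k⁻¹ * (f a (t + k) - f a t))
    (f' := fun k a => k⁻¹ * (Dx f a (t + k) - Dx f a t)) (g' := fun _ => L) ?_
    (.of_forall fun n => ((hfx n.2 _).hasDerivAt.sub (hfx n.2 t).hasDerivAt).const_mul _)
    (.of_forall fun a => (hft a).hasDerivAt.tendsto_slope_zero)
  rw [Metric.tendstoUniformlyOnFilter_iff]
  intro ε hε
  obtain ⟨δ, hδ, hclose⟩ := Metric.continuousAt_iff.mp hcont (ε / 2) (half_pos hε)
  have hk : ∀ᶠ k in 𝓝[≠] (0 : ℝ), k ≠ 0 ∧ |k| < δ := by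
    filter_upwards [self_mem_nhdsWithin,
      nhdsWithin_le_nhds (Metric.ball_mem_nhds 0 hδ)] with k hk0 hkδ
    exact ⟨hk0, by simpa using hkδ⟩
  filter_upwards [hk.prod_mk (Metric.ball_mem_nhds x hδ)] with ⟨k, a⟩ ⟨⟨hk0, hkδ⟩, ha⟩
  have hmvt : ‖(Dx f a (t + k) - (t + k) * L) - (Dx f a t - t * L)‖ ≤ ε / 2 * ‖t + k - t‖ := by
    refine (convex_ball t δ).norm_image_sub_le_of_norm_hasDerivWithin_le
      (f' := fun s => Dt (Dx f) a s - L)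
      (fun s _ => (((hfxt a s).hasDerivAt).sub ((hasDerivAt_id s).mul_const L)).hasDerivWithinAt
        |>.congr_deriv (by rw [one_mul]; rfl))
      (fun s hs => ?_) (Metric.mem_ball_self hδ) (by simpa using hkδ)
    rw [← dist_eq_norm]
    exact (@hclose (a, s) (max_lt ha hs)).le
  have hquot : k⁻¹ * (Dx f a (t + k) - Dx f a t) - L
      = k⁻¹ * ((Dx f a (t + k) - (t + k) * L) - (Dx f a t - t * L)) := by
    field_simp
    ring
  rw [dist_comm, dist_eq_norm, hquot, norm_mul, norm_inv]
  calc ‖k‖⁻¹ * ‖(Dx f a (t + k) - (t + k) * L) - (Dx f a t - t * L)‖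
      ≤ ‖k‖⁻¹ * (ε / 2 * ‖k‖) := by
        gcongr
        simpa using hmvt
    _ = ε / 2 := by field_simp [norm_ne_zero_iff.2 hk0]
    _ < ε := half_lt_self hε

theorem contDiff_of_differentiable_Dx_iterate {t : ℝ} :
    ∀ {n : ℕ} {f : ℝ → ℝ → ℝ}, (∀ k < n, Differentiable ℝ fun a => (Dx^[k] f) a t) →
      Continuous (fun a => (Dx^[n] f) a t) → ContDiff ℝ n fun a => f a t
  | 0, _, _, hcont => contDiff_zero.2 hcont
  | n + 1, f, hdiff, hcont => by
    rw [Nat.cast_add_one, contDiff_succ_iff_deriv]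
    exact ⟨hdiff 0 n.succ_pos, by simp,
      contDiff_of_differentiable_Dx_iterate (f := Dx f)
        (fun k hk => hdiff (k + 1) (Nat.succ_lt_succ hk)) hcont⟩

theorem riccati_of_conservation_law {u : ℝ → ℝ → ℝ} {A : ℝ → ℝ} {x t : ℝ}
    (hA : ContDiff ℝ 2 A) (hu : ContDiff ℝ 2 fun a => u a t) (hux : u x t ≠ 0)
    (hut : DifferentiableAt ℝ (u x ·) t) (huxt : DifferentiableAt ℝ (Dx u x ·) t)
    (hcons : Dt u x t = deriv (fun a => A a * u a t) x)
    (hcons' : Dt (Dx u) x t = deriv (deriv fun a => A a * u a t) x) :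
    -deriv (fun s => -Dx u x s / u x s) t - deriv (deriv A) x
      = -deriv (fun a => A a * (-Dx u a t / u a t)) x := by
  have hA₁ : ∀ a, HasDerivAt A (deriv A a) a :=
    fun a => (hA.differentiable two_ne_zero a).hasDerivAt
  have hA₂ : HasDerivAt (deriv A) (deriv (deriv A) x) x :=
    (hA.differentiable_deriv_two x).hasDerivAt
  have hu₁ : ∀ a, HasDerivAt (u · t) (Dx u a t) a :=
    fun a => (hu.differentiable two_ne_zero a).hasDerivAt
  have hu₂ : HasDerivAt (Dx u · t) (Dx (Dx u) x t) x :=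
    (hu.differentiable_deriv_two x).hasDerivAt
  have hflux : deriv (fun a => A a * u a t) = fun a => deriv A a * u a t + A a * Dx u a t :=
    funext fun a => ((hA₁ a).mul (hu₁ a)).deriv
  have hflux' : deriv (deriv fun a => A a * u a t) x = deriv (deriv A) x * u x t
      + deriv A x * Dx u x t + (deriv A x * Dx u x t + A x * Dx (Dx u) x t) := by
    rw [hflux]
    exact ((hA₂.mul (hu₁ x)).add ((hA₁ x).mul hu₂)).deriv
  have hψt : HasDerivAt (fun s => -Dx u x s / u x s)
      ((-Dt (Dx u) x t * u x t - -Dx u x t * Dt u x t) / u x t ^ 2) t :=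
    huxt.hasDerivAt.neg.div hut.hasDerivAt hux
  have hψx : HasDerivAt (fun a => -Dx u a t / u a t)
      ((-Dx (Dx u) x t * u x t - -Dx u x t * Dx u x t) / u x t ^ 2) x :=
    hu₂.neg.div (hu₁ x) hux
  rw [hψt.deriv, ((hA₁ x).fun_mul hψx).deriv, hcons, hcons', hflux', hflux]
  field_simp
  ring

theorem stmt15_general (T : ℝ)
    (α : ℝ × ℝ × ℝ → ℝ) (hα : ContDiff ℝ 2 α)
    (V : ℝ → ℝ → ℝ)
    (hVx : ∀ k ≤ 3, ∀ x t : ℝ, DifferentiableAt ℝ (fun x' => (Dx^[k] V) x' t) x)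
    (hVtx : ∀ k ≤ 2, ∀ x t : ℝ, DifferentiableAt ℝ (fun t' => (Dx^[k] V) x t') t)
    (hVxc : ∀ k ≤ 4, Continuous fun q : ℝ × ℝ => (Dx^[k] V) q.1 q.2)
    (hVtxc : ∀ k ≤ 2, Continuous fun q : ℝ × ℝ => Dt (Dx^[k] V) q.1 q.2)
    (hVpos : ∀ x t : ℝ, 0 < Dx V x t)
    (φ : ℝ → ℝ → ℝ)
    (hφ : ∀ x τ : ℝ, φ x τ = -(Dx^[2] V) x (T - τ) / Dx V x (T - τ))
    (hHJB : ∀ x : ℝ, ∀ t ∈ Set.Ioo (0 : ℝ) T,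
      Dt V x t - α (x, T - t, φ x (T - t)) * Dx V x t = 0) :
    ∀ x : ℝ, ∀ τ ∈ Set.Ioo (0 : ℝ) T,
      deriv (fun τ' => φ x τ') τ
          - deriv (fun x' => deriv (fun x'' => α (x'', τ, φ x'' τ)) x') x
        = -deriv (fun x' => α (x', τ, φ x' τ) * φ x' τ) x := by
  intro x τ hτ
  obtain ⟨t, rfl⟩ : ∃ t, τ = T - t := ⟨T - τ, by ring⟩
  have ht : t ∈ Set.Ioo 0 T := ⟨by linarith [hτ.2], by linarith [hτ.1]⟩
  simp only [hφ, sub_sub_cancel] at hHJB ⊢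
  rw [deriv_comp_const_sub (f := fun s => -(Dx^[2] V) x s / Dx V x s), sub_sub_cancel]
  set A : ℝ → ℝ := fun a => α (a, T - t, -(Dx^[2] V) a t / Dx V a t)
  have hu : ContDiff ℝ 3 fun a => Dx V a t :=
    contDiff_of_differentiable_Dx_iterate (n := 3) (fun k hk a => hVx (k + 1) (by omega) a t)
      ((hVxc 4 le_rfl).comp (continuous_id.prodMk continuous_const))
  have hA : ContDiff ℝ 2 A :=
    hα.comp (contDiff_id.prodMk (contDiff_const.prodMk
      ((hu.deriv'.neg).div (hu.of_le (by norm_num)) fun a => (hVpos a t).ne')))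
  have hHJBt : (fun a => Dt V a t) = fun a => A a * Dx V a t :=
    funext fun a => by linarith [hHJB a t ht]
  have hcons : ∀ a, Dt (Dx V) a t = deriv (fun a => A a * Dx V a t) a := fun a =>
    hHJBt ▸ (hasDerivAt_Dt_of_continuousAt_Dt_Dx (f := V) (hVx 0 (by norm_num))
      (hVtx 1 one_le_two) (fun a => hVtx 0 zero_le_two a t)
      (hVtxc 1 one_le_two).continuousAt).deriv.symm
  have hcons' : Dt (Dx (Dx V)) x t = deriv (deriv fun a => A a * Dx V a t) x :=
    funext hcons ▸ (hasDerivAt_Dt_of_continuousAt_Dt_Dx (f := Dx V) (hVx 1 (by norm_num))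
      (hVtx 2 le_rfl) (fun a => hVtx 1 one_le_two a t) (hVtxc 2 le_rfl).continuousAt).deriv.symm
  exact riccati_of_conservation_law hA (hu.of_le (by norm_num)) (hVpos x t).ne'
    (hVtx 1 one_le_two x t) (hVtx 2 le_rfl x t) (hcons x) hcons'

/-- Riccati transformation of the HJB equation: if `V(x,t)` is sufficiently smooth
(the partial derivatives `∂_t ∂_x^k V`, `k ≤ 2`, and `∂_x^k V`, `k ≤ 4`, exist and are
continuous), `∂_x V > 0`, `α` is twice continuously differentiable, and `V` satisfies
`∂_t V − α(x, T−t, φ(x,T−t)) ∂_x V = 0` where `φ(x,τ) = −∂²_x V(x,T−τ)/∂_x V(x,T−τ)`,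
then `φ` satisfies the quasilinear equation in divergence form
`∂_τ φ − ∂²_x[α(x,τ,φ(x,τ))] = −∂_x[α(x,τ,φ(x,τ)) φ(x,τ)]` on `ℝ × (0,T)`. -/
theorem stmt15 (T : ℝ) (hT : 0 < T)
    (α : ℝ × ℝ × ℝ → ℝ) (hα : ContDiff ℝ 2 α)
    (V : ℝ → ℝ → ℝ)
    (hVx : ∀ k ≤ 3, ∀ x t : ℝ, DifferentiableAt ℝ (fun x' => (Dx^[k] V) x' t) x)
    (hVtx : ∀ k ≤ 2, ∀ x t : ℝ, DifferentiableAt ℝ (fun t' => (Dx^[k] V) x t') t)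
    (hVxc : ∀ k ≤ 4, Continuous fun q : ℝ × ℝ => (Dx^[k] V) q.1 q.2)
    (hVtxc : ∀ k ≤ 2, Continuous fun q : ℝ × ℝ => Dt (Dx^[k] V) q.1 q.2)
    (hVpos : ∀ x t : ℝ, 0 < Dx V x t)
    (φ : ℝ → ℝ → ℝ)
    (hφ : ∀ x τ : ℝ, φ x τ = -(Dx^[2] V) x (T - τ) / Dx V x (T - τ))
    (hHJB : ∀ x : ℝ, ∀ t ∈ Set.Ioo (0 : ℝ) T,
      Dt V x t - α (x, T - t, φ x (T - t)) * Dx V x t = 0) :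
    ∀ x : ℝ, ∀ τ ∈ Set.Ioo (0 : ℝ) T,
      deriv (fun τ' => φ x τ') τ
          - deriv (fun x' => deriv (fun x'' => α (x'', τ, φ x'' τ)) x') x
        = -deriv (fun x' => α (x', τ, φ x' τ) * φ x' τ) x :=
  stmt15_general T α hα V hVx hVtx hVxc hVtxc hVpos φ hφ hHJB
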